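/- For any graph G, the number (3+√5)/2 is a Laplacian eigenvalue of G with multiplicity at least p_2(G) − q_2(G), and likewise (3−√5)/2 is a Laplacian eigenvalue with multiplicity at least p_2(G) − q_2(G). -/

import Mathlib

open Matrix Polynomial Real

/-- A walk `w` from `u` to `v` is a pendant path of length `k` if it is a path of length
`k`, its end `u` has degree `1`, its end `v` has degree at least `3`, and all internal
vertices have degree `2`. -/
def IsPendantPath {V : Type*} [Fintype V] [DecidableEq V] (G : SimpleGraph V)
    [DecidableRel G.Adj] {u v : V} (w : G.Walk u v) (k : ℕ) : Prop :=
  w.IsPath ∧ w.length = k ∧ G.degree u = 1 ∧ 3 ≤ G.degree v ∧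
    ∀ x ∈ w.support, x ≠ u → x ≠ v → G.degree x = 2

/-- `pendantPathCount G k` is `p_k(G)`, the number of pendant paths of length `k` of `G`. -/
noncomputable def pendantPathCount {V : Type*} [Fintype V] [DecidableEq V]
    (G : SimpleGraph V) [DecidableRel G.Adj] (k : ℕ) : ℕ :=
  Nat.card {p : (u : V) × (v : V) × G.Walk u v // IsPendantPath G p.2.2 k}

/-- `pendantAttachCount G k` is `q_k(G)`, the number of vertices of degree at least `3`
which are an end vertex of some pendant path of length `k`. -/
noncomputable def pendantAttachCount {V : Type*} [Fintype V] [DecidableEq V]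
    (G : SimpleGraph V) [DecidableRel G.Adj] (k : ℕ) : ℕ :=
  Nat.card {v : V // 3 ≤ G.degree v ∧ ∃ u, ∃ w : G.Walk u v, IsPendantPath G w k}

/-!
If `a – m – b` is a pendant path and `μ² - 3μ + 1 = 0`, then `L - μ` sends
`e_a + (1 - μ) e_m` to `(μ - 1) e_b`. These `p₂` vectors are linearly independent (the leaf `a`
determines the path), and `L - μ` maps their span into the span of the `q₂` vectors `e_b`, so
its kernel on that span, which lies in the `μ`-eigenspace of `L`, has dimension at least
`p₂ - q₂`. The geometric multiplicity of an eigenvalue is at most its algebraic multiplicity.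
-/

open Module Submodule in
theorem LinearMap.natCard_le_finrank_ker_add_natCard {K M N : Type*} [Field K]
    [AddCommGroup M] [Module K M] [FiniteDimensional K M] [AddCommGroup N] [Module K N]
    {ι κ : Type*} [Finite ι] [Finite κ] (f : M →ₗ[K] N) {x : ι → M}
    (hx : LinearIndependent K x) (b : κ → N) (hfx : ∀ i, f (x i) ∈ span K (Set.range b)) :
    Nat.card ι ≤ finrank K (ker f) + Nat.card κ := by
  cases nonempty_fintype ι
  cases nonempty_fintype κ
  let W := span K (Set.range x)
  have : FiniteDimensional K (span K (Set.range b)) :=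
    FiniteDimensional.span_of_finite K (Set.finite_range b)
  have hrange : finrank K (range (f.domRestrict W)) ≤ Nat.card κ := calc
    _ ≤ finrank K (span K (Set.range b)) := by
      refine finrank_mono ?_
      rw [range_domRestrict, map_span, span_le, ← Set.range_comp]
      rintro _ ⟨i, rfl⟩
      exact hfx i
    _ ≤ Nat.card κ := by rw [Nat.card_eq_fintype_card]; exact finrank_range_le_card b
  have hker : finrank K (ker (f.domRestrict W)) ≤ finrank K (ker f) := by
    rw [ker_domRestrict, ← finrank_map_subtype_eq, map_comap_subtype]
    exact finrank_mono inf_le_right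
  have := (f.domRestrict W).finrank_range_add_finrank_ker
  rw [finrank_span_eq_card hx, ← Nat.card_eq_fintype_card] at this
  omega

theorem Matrix.natCard_sub_natCard_le_rootMultiplicity_charpoly {K n : Type*} [Field K]
    [Fintype n] [DecidableEq n] (A : Matrix n n K) (μ : K) {ι κ : Type*} [Finite ι] [Finite κ]
    {x : ι → n → K} (hx : LinearIndependent K x) (b : κ → n → K)
    (hAx : ∀ i, A *ᵥ x i - μ • x i ∈ Submodule.span K (Set.range b)) :
    Nat.card ι - Nat.card κ ≤ A.charpoly.rootMultiplicity μ := by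
  have := (A.toLin' - μ • 1).natCard_le_finrank_ker_add_natCard hx b hAx
  rw [← Module.End.eigenspace_def] at this
  have := LinearMap.finrank_eigenspace_le A.toLin' μ
  rw [Matrix.charpoly_toLin'] at this
  omega

theorem LinearIndependent.of_apply_eq_ite {K n ι : Type*} [Ring K] [DecidableEq ι]
    {x : ι → n → K} (e : ι → n) (h : ∀ i j, x i (e j) = if i = j then 1 else 0) :
    LinearIndependent K x := by
  refine LinearIndependent.of_comp (LinearMap.funLeft K K e) ?_
  convert Pi.linearIndependent_single_one ι K
  ext i
  simp [LinearMap.funLeft, h, Pi.single_apply, eq_comm]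

namespace SimpleGraph

variable {V : Type*} [Fintype V] [DecidableEq V] {G : SimpleGraph V} [DecidableRel G.Adj]

theorem lapMatrix_mulVec_single_one {R : Type*} [NonAssocRing R] (i : V) :
    G.lapMatrix R *ᵥ Pi.single i 1 =
      G.degree i • Pi.single i 1 - ∑ j ∈ G.neighborFinset i, Pi.single j 1 := by
  ext z
  by_cases hz : z = i
  · subst hz
    simp [lapMatrix_mulVec_apply]
  · simp [lapMatrix_mulVec_apply, Pi.single_apply, hz, Finset.sum_apply, G.adj_comm]

theorem lapMatrix_mulVec_pendant {R : Type*} [CommRing R] {a m b : V}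
    (ha : G.neighborFinset a = {m}) (hm : G.neighborFinset m = {a, b}) (hab : a ≠ b)
    {μ : R} (hμ : μ ^ 2 - 3 * μ + 1 = 0) :
    G.lapMatrix R *ᵥ (Pi.single a 1 + (1 - μ) • Pi.single m 1) -
      μ • (Pi.single a 1 + (1 - μ) • Pi.single m 1) = (μ - 1) • Pi.single b 1 := by
  have hdega : G.degree a = 1 := by
    rw [← card_neighborFinset_eq_degree, ha, Finset.card_singleton]
  have hdegm : G.degree m = 2 := by
    rw [← card_neighborFinset_eq_degree, hm, Finset.card_pair hab]
  rw [mulVec_add, mulVec_smul, lapMatrix_mulVec_single_one, lapMatrix_mulVec_single_one, ha, hm,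
    Finset.sum_singleton, Finset.sum_pair hab, hdega, hdegm]
  linear_combination (norm := module) hμ • (Pi.single m 1 : V → R)

end SimpleGraph

namespace IsPendantPath

open SimpleGraph

variable {V : Type*} [Fintype V] [DecidableEq V] {G : SimpleGraph V} [DecidableRel G.Adj]
  {u v : V} {w : G.Walk u v}

theorem adj_snd (hw : IsPendantPath G w 2) : G.Adj u w.snd :=
  w.adj_snd (by simp [← Walk.length_eq_zero_iff, hw.2.1])

theorem snd_adj (hw : IsPendantPath G w 2) : G.Adj w.snd v := by
  have h := w.adj_penultimate (by simp [← Walk.length_eq_zero_iff, hw.2.1])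
  simpa [Walk.penultimate, hw.2.1] using h

theorem degree_snd (hw : IsPendantPath G w 2) : G.degree w.snd = 2 :=
  hw.2.2.2.2 _ (w.getVert_mem_support 1) hw.adj_snd.ne' hw.snd_adj.ne

theorem start_ne_end {k : ℕ} (hw : IsPendantPath G w k) : u ≠ v := by
  rintro rfl
  have := hw.2.2.1
  have := hw.2.2.2.1
  omega

theorem neighborFinset_start (hw : IsPendantPath G w 2) : G.neighborFinset u = {w.snd} := by
  obtain ⟨a, ha⟩ := Finset.card_eq_one.mp ((G.card_neighborFinset_eq_degree u).trans hw.2.2.1)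
  have hsnd : w.snd ∈ G.neighborFinset u := by simpa using hw.adj_snd
  rw [ha, Finset.mem_singleton] at hsnd
  rw [ha, hsnd]

theorem neighborFinset_snd (hw : IsPendantPath G w 2) : G.neighborFinset w.snd = {u, v} := by
  refine (Finset.eq_of_subset_of_card_le (fun y hy => ?_) ?_).symm
  · rcases Finset.mem_insert.mp hy with rfl | hy
    · simpa using hw.adj_snd.symm
    · rw [Finset.mem_singleton.mp hy]
      simpa using hw.snd_adj
  · rw [card_neighborFinset_eq_degree, hw.degree_snd, Finset.card_pair hw.start_ne_end]

theorem eq_of_snd_eq {w' : G.Walk u v} (hw : IsPendantPath G w 2) (hw' : IsPendantPath G w' 2)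
    (h : w.snd = w'.snd) : w = w' := by
  refine Walk.ext_getVert_le_length (hw.2.1.trans hw'.2.1.symm) fun k hk => ?_
  rw [hw.2.1] at hk
  interval_cases k
  · simp
  · exact h
  · rw [w.getVert_of_length_le hw.2.1.le, w'.getVert_of_length_le hw'.2.1.le]

end IsPendantPath

section PendantPathTwo

open SimpleGraph

variable {V : Type*} [Fintype V] [DecidableEq V] (G : SimpleGraph V) [DecidableRel G.Adj]

abbrev PendantPath (k : ℕ) : Type _ :=
  {p : (u : V) × (v : V) × G.Walk u v // IsPendantPath G p.2.2 k}

theorem pendantPath_two_start_injective :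
    Function.Injective fun p : PendantPath G 2 => p.1.1 := by
  rintro ⟨⟨u, v, w⟩, hw⟩ ⟨⟨u', v', w'⟩, hw'⟩ (rfl : u = u')
  have hsnd : w.snd = w'.snd := by
    have h := hw'.adj_snd
    rwa [← mem_neighborFinset, hw.neighborFinset_start, Finset.mem_singleton, eq_comm] at h
  obtain rfl : v = v' := by
    have h := hw'.snd_adj
    rw [← hsnd, ← mem_neighborFinset, hw.neighborFinset_snd, Finset.mem_insert,
      Finset.mem_singleton] at h
    exact h.resolve_left hw'.start_ne_end.symm |>.symm
  obtain rfl := hw.eq_of_snd_eq hw' hsnd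
  rfl

variable {G} {K : Type*} [Field K]

noncomputable def pendantVector (μ : K) (p : PendantPath G 2) : V → K :=
  Pi.single p.1.1 1 + (1 - μ) • Pi.single p.1.2.2.snd 1

theorem pendantVector_apply_start (μ : K) (p q : PendantPath G 2) :
    pendantVector μ p q.1.1 = if p = q then 1 else 0 := by
  have hleaf : q.1.1 ≠ p.1.2.2.snd := fun h => by
    have := q.2.2.2.1
    rw [h, p.2.degree_snd] at this
    omega
  have hstart : q.1.1 = p.1.1 ↔ p = q :=
    ⟨fun h => pendantPath_two_start_injective G h.symm, fun h => h ▸ rfl⟩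
  simp [pendantVector, Pi.single_apply, hleaf, hstart]

theorem lapMatrix_mulVec_pendantVector {μ : K} (hμ : μ ^ 2 - 3 * μ + 1 = 0)
    (p : PendantPath G 2) :
    G.lapMatrix K *ᵥ pendantVector μ p - μ • pendantVector μ p =
      (μ - 1) • Pi.single p.1.2.1 1 :=
  lapMatrix_mulVec_pendant p.2.neighborFinset_start p.2.neighborFinset_snd p.2.start_ne_end hμ

variable (G)

theorem pendantPathCount_two_sub_le_rootMultiplicity {μ : K} (hμ : μ ^ 2 - 3 * μ + 1 = 0) :
    pendantPathCount G 2 - pendantAttachCount G 2 ≤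
      (G.lapMatrix K).charpoly.rootMultiplicity μ := by
  have := Finite.of_injective _ (pendantPath_two_start_injective G)
  refine (G.lapMatrix K).natCard_sub_natCard_le_rootMultiplicity_charpoly μ
    (LinearIndependent.of_apply_eq_ite _ (pendantVector_apply_start μ))
    (fun q : {v : V // 3 ≤ G.degree v ∧ ∃ u, ∃ w : G.Walk u v, IsPendantPath G w 2} =>
      Pi.single q.1 1) fun p => ?_
  rw [lapMatrix_mulVec_pendantVector hμ]
  exact Submodule.smul_mem _ _ <|
    Submodule.subset_span ⟨⟨p.1.2.1, p.2.2.2.2.1, p.1.1, p.1.2.2, p.2⟩, rfl⟩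

end PendantPathTwo

/-- For any graph `G`, each of `(3+√5)/2` and `(3-√5)/2` is a Laplacian eigenvalue of `G`
with multiplicity at least `p₂(G) - q₂(G)`. -/
theorem laplacian_golden_eigenvalues {V : Type*} [Fintype V] [DecidableEq V]
    (G : SimpleGraph V) [DecidableRel G.Adj] :
    pendantPathCount G 2 - pendantAttachCount G 2 ≤
      Polynomial.rootMultiplicity ((3 + Real.sqrt 5) / 2)
        (Matrix.charpoly (Matrix.diagonal (fun v => (G.degree v : ℝ)) - G.adjMatrix ℝ)) ∧
    pendantPathCount G 2 - pendantAttachCount G 2 ≤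
      Polynomial.rootMultiplicity ((3 - Real.sqrt 5) / 2)
        (Matrix.charpoly (Matrix.diagonal (fun v => (G.degree v : ℝ)) - G.adjMatrix ℝ)) := by
  -- `G.lapMatrix ℝ` is by definition `diagonal (degree) - adjMatrix ℝ`
  have h5 := Real.sq_sqrt (show (0 : ℝ) ≤ 5 by norm_num)
  exact ⟨pendantPathCount_two_sub_le_rootMultiplicity G (by linear_combination h5 / 4),
    pendantPathCount_two_sub_le_rootMultiplicity G (by linear_combination h5 / 4)⟩
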